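/- Let 𝒥 = (M, λ, τ) be a weakly noetherian reduction structure with disjoint cones. Then 𝒥 is noetherian and confluent, i.e. for every marked set F on 𝒥, every polynomial g ∈ P has exactly one reduced form l with g →_* l. -/

import Mathlib

open MvPolynomial

/-- Terms (monomials) in `n` variables, identified with their exponent vectors. -/
abbrev Term (n : ℕ) := Fin n →₀ ℕ

/-- A reduction structure `𝒥 = (M, λ, τ)`. -/
structure RedStruct (n : ℕ) where
  M : Finset (Term n)
  tau : Term n → Set (Term n)
  lam : Term n → Finset (Term n)
  tau_orderIdeal : ∀ α ∈ M, ∀ η ∈ tau α, ∀ η' : Term n, η' ≤ η → η' ∈ tau α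
  cover : ∀ β : Term n, (∃ α ∈ M, ∃ η, β = α + η) ↔ (∃ α ∈ M, ∃ η ∈ tau α, β = α + η)
  lam_tail : ∀ α ∈ M, ∀ γ ∈ lam α, ¬ ∃ η ∈ tau α, γ = α + η

namespace RedStruct

variable {n : ℕ}

/-- The cone of `x^α`. -/
def cone (𝒥 : RedStruct n) (α : Term n) : Set (Term n) := {β | ∃ η ∈ 𝒥.tau α, β = α + η}

/-- The semigroup ideal `J` generated by `M`. -/
def idealJ (𝒥 : RedStruct n) : Set (Term n) := {β | ∃ α ∈ 𝒥.M, ∃ η, β = α + η}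

def hasMaximalCones (𝒥 : RedStruct n) : Prop := ∀ α ∈ 𝒥.M, 𝒥.tau α = Set.univ

def hasDisjointCones (𝒥 : RedStruct n) : Prop :=
  ∀ α ∈ 𝒥.M, ∀ α' ∈ 𝒥.M, α ≠ α' → 𝒥.cone α ∩ 𝒥.cone α' = ∅

/-- `𝒥'` is a substructure of `𝒥`: same `M`, same tails, smaller multiplicative sets. -/
def IsSubstructure (𝒥' 𝒥 : RedStruct n) : Prop :=
  𝒥'.M = 𝒥.M ∧ 𝒥'.lam = 𝒥.lam ∧ ∀ α ∈ 𝒥.M, 𝒥'.tau α ⊆ 𝒥.tau α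

/-- An ordered reduction structure: there are a well-founded strictly (partially) ordered set
`(W, ≺)` and an ordering function `φ` with `φ(x^{γ+η}) ≺ φ(x^{α+η})` for all `x^α ∈ M`,
`x^γ ∈ λ_α`, `x^η ∈ τ_α`. -/
def IsOrdered (𝒥 : RedStruct n) : Prop :=
  ∃ (W : Type) (lt : W → W → Prop) (φ : Term n → W),
    IsStrictOrder W lt ∧ WellFounded lt ∧
      ∀ α ∈ 𝒥.M, ∀ γ ∈ 𝒥.lam α, ∀ η ∈ 𝒥.tau α, lt (φ (γ + η)) (φ (α + η))

end RedStruct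

variable {n : ℕ}

/-- A marked set on `𝒥` over the ring `A`: each `f_α = x^α + Σ_{γ ∈ λ_α} c γ x^γ`. -/
def IsMarkedSet {A : Type*} [CommRing A] (𝒥 : RedStruct n)
    (F : Term n → MvPolynomial (Fin n) A) : Prop :=
  ∀ α ∈ 𝒥.M, MvPolynomial.coeff α (F α) = 1 ∧
    ∀ β : Term n, MvPolynomial.coeff β (F α) ≠ 0 → β = α ∨ β ∈ 𝒥.lam α

/-- One base step of reduction, allowing multipliers from the family `σ`. -/
def RedStep {A : Type*} [CommRing A] (𝒥 : RedStruct n) (σ : Term n → Set (Term n))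
    (F : Term n → MvPolynomial (Fin n) A) (g h : MvPolynomial (Fin n) A) : Prop :=
  ∃ α ∈ 𝒥.M, ∃ η ∈ σ α, MvPolynomial.coeff (α + η) g ≠ 0 ∧
    h = g - MvPolynomial.monomial η (MvPolynomial.coeff (α + η) g) * F α

/-- The reduction relation `→_{F𝒥}`. -/
def Red {A : Type*} [CommRing A] (𝒥 : RedStruct n) (F : Term n → MvPolynomial (Fin n) A) :
    MvPolynomial (Fin n) A → MvPolynomial (Fin n) A → Prop :=
  RedStep 𝒥 𝒥.tau F

/-- The reflexive-transitive closure `→_*` of `→_{F𝒥}`. -/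
def RedStar {A : Type*} [CommRing A] (𝒥 : RedStruct n) (F : Term n → MvPolynomial (Fin n) A) :
    MvPolynomial (Fin n) A → MvPolynomial (Fin n) A → Prop :=
  Relation.ReflTransGen (Red 𝒥 F)

/-- A polynomial is reduced if its support is contained in `N(J)`. -/
def IsReducedPoly {A : Type*} [CommRing A] (𝒥 : RedStruct n)
    (l : MvPolynomial (Fin n) A) : Prop :=
  ∀ β ∈ l.support, β ∉ 𝒥.idealJ

/-- A relation is noetherian: there is no infinite chain of steps. -/
def RelNoetherian {X : Type*} (r : X → X → Prop) : Prop :=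
  ¬ ∃ f : ℕ → X, ∀ i, r (f i) (f (i + 1))

/-- `𝒥` is noetherian over `A`: for every marked set `F` on `𝒥` over `A`, every sequence
of `→_{F𝒥}` reduction steps terminates. -/
def RedStruct.IsNoetherianOver (𝒥 : RedStruct n) (A : Type*) [CommRing A] : Prop :=
  ∀ F : Term n → MvPolynomial (Fin n) A, IsMarkedSet 𝒥 F → RelNoetherian (Red 𝒥 F)

/-- `𝒥` is weakly noetherian over `A`: it has a noetherian substructure. -/
def RedStruct.IsWeaklyNoetherianOver (𝒥 : RedStruct n) (A : Type*) [CommRing A] : Prop :=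
  ∃ 𝒥' : RedStruct n, RedStruct.IsSubstructure 𝒥' 𝒥 ∧ 𝒥'.IsNoetherianOver A

/-- The set `σF = {x^η f_α : x^α ∈ M, x^η ∈ σ_α}`. -/
def tauF {A : Type*} [CommRing A] (𝒥 : RedStruct n) (σ : Term n → Set (Term n))
    (F : Term n → MvPolynomial (Fin n) A) : Set (MvPolynomial (Fin n) A) :=
  {p | ∃ α ∈ 𝒥.M, ∃ η ∈ σ α, p = MvPolynomial.monomial η (1 : A) * F α}

/-- The `A`-submodule `⟨σF⟩` generated by `σF`. -/
noncomputable def tauSpan {A : Type*} [CommRing A] (𝒥 : RedStruct n) (σ : Term n → Set (Term n))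
    (F : Term n → MvPolynomial (Fin n) A) : Submodule A (MvPolynomial (Fin n) A) :=
  Submodule.span A (tauF 𝒥 σ F)

/-- The `A`-submodule `⟨N(J)⟩` spanned by the terms outside `J`. -/
noncomputable def NJSpan (𝒥 : RedStruct n) (A : Type*) [CommRing A] :
    Submodule A (MvPolynomial (Fin n) A) :=
  Submodule.span A {p | ∃ β ∉ 𝒥.idealJ, p = MvPolynomial.monomial β (1 : A)}

/-- `F` is a marked basis: `(F) ⊕ ⟨N(J)⟩ = P` as `A`-modules. -/
def IsMarkedBasis {A : Type*} [CommRing A] (𝒥 : RedStruct n)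
    (F : Term n → MvPolynomial (Fin n) A) : Prop :=
  IsCompl (Submodule.restrictScalars A (Ideal.span (F '' ↑𝒥.M))) (NJSpan 𝒥 A)

/-- A representation of `g` by `σF`: `g = Σ c_(α,η) · x^η f_α` over finitely many
distinct pairs `(α, η)` with `x^α ∈ M`, `x^η ∈ σ_α` and nonzero coefficients. -/
def IsRepr {A : Type*} [CommRing A] (𝒥 : RedStruct n) (σ : Term n → Set (Term n))
    (F : Term n → MvPolynomial (Fin n) A) (c : (Term n × Term n) →₀ A)
    (g : MvPolynomial (Fin n) A) : Prop :=
  (∀ p ∈ c.support, p.1 ∈ 𝒥.M ∧ p.2 ∈ σ p.1) ∧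
    g = c.sum fun p a => MvPolynomial.monomial p.2 a * F p.1

/-- The S-polynomial `S(f_β, f_α) = (lcm(x^α,x^β)/x^α) f_α − (lcm(x^α,x^β)/x^β) f_β`,
written `SPoly F α β`. -/
noncomputable def SPoly {A : Type*} [CommRing A] (F : Term n → MvPolynomial (Fin n) A) (α β : Term n) :
    MvPolynomial (Fin n) A :=
  MvPolynomial.monomial ((α ⊔ β) - α) (1 : A) * F α -
    MvPolynomial.monomial ((α ⊔ β) - β) (1 : A) * F β

/-!
With disjoint cones the cones of a substructure, which still cover `J`, cannot be smaller, so
`𝒥` has the reduction relation of its noetherian substructure and reduced forms exist.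
Two reduced forms of `g` differ by a reduced `p = Σ c_{α,η} x^η f_α` in `⟨τF⟩`. If `p ≠ 0`,
the heads `x^{α+η}` of the summands are pairwise distinct (disjoint cones) and absent from `p`,
so each is cancelled by a tail term `x^{γ+η'}` of another summand. Following these
cancellations inside the finite support yields a cycle in the graph of edges
`α + η → γ + η` (`γ ∈ λ_α`). A shortest cycle has no chords, and reducing its first term with
the marked set whose tail coefficients are all `1` then runs around the cycle forever.
-/

theorem Function.Periodic.exists_lt_apply_eq_apply_add {X : Type*} {β : ℕ → X} {r : ℕ}
    (hper : Function.Periodic β r) (hr : 0 < r) (a j : ℕ) : ∃ d < r, β j = β (a + d) := by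
  set m := j + a * r - a
  refine ⟨m % r, Nat.mod_lt _ hr, ?_⟩
  have hm : a + m % r + m / r * r = j + a * r := by
    have := Nat.mod_add_div' m r
    have : a ≤ a * r := Nat.le_mul_of_pos_right a hr
    omega
  calc β j = β (j + a * r) := by simpa using (hper.nat_mul a j).symm
    _ = β (a + m % r + m / r * r) := by rw [hm]
    _ = β (a + m % r) := by simpa using hper.nat_mul (m / r) (a + m % r)

namespace Relation

variable {X : Type*} {R : X → X → Prop}

def IsCycle (R : X → X → Prop) (r : ℕ) (β : ℕ → X) : Prop :=
  0 < r ∧ Function.Periodic β r ∧ ∀ k, R (β k) (β (k + 1))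

def IsChordless (R : X → X → Prop) (β : ℕ → X) : Prop :=
  ∀ i j, R (β i) (β j) → β j = β (i + 1)

theorem isCycle_of_closed_walk {r : ℕ} {w : ℕ → X} (hr : 0 < r)
    (hw : ∀ k, k + 1 < r → R (w k) (w (k + 1))) (hclose : R (w (r - 1)) (w 0)) :
    IsCycle R r (fun k => w (k % r)) := by
  refine ⟨hr, fun k => by simp only [Nat.add_mod_right], fun k => ?_⟩
  have hk : k % r < r := Nat.mod_lt _ hr
  show R (w (k % r)) (w ((k + 1) % r))
  rw [← Nat.mod_add_mod k r 1]
  rcases Nat.lt_or_ge (k % r + 1) r with hlt | hge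
  · simpa only [Nat.mod_eq_of_lt hlt] using hw _ hlt
  · have hlast : k % r + 1 = r := by omega
    simpa only [hlast, Nat.mod_self, ← Nat.eq_sub_of_add_eq hlast] using hclose

theorem IsCycle.exists_shorter {r : ℕ} {β : ℕ → X} (hc : IsCycle R r β) {i j : ℕ}
    (hchord : R (β i) (β j)) (hne : β j ≠ β (i + 1)) : ∃ r' < r, ∃ β', IsCycle R r' β' := by
  obtain ⟨hr, hper, hstep⟩ := hc
  obtain ⟨d, hd, hj⟩ := hper.exists_lt_apply_eq_apply_add hr (i + 1) j
  have hd0 : d ≠ 0 := by rintro rfl; exact hne hj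
  refine ⟨r - d, by omega, _, isCycle_of_closed_walk (w := fun k => β (i + 1 + d + k)) (by omega)
    (fun k _ => hstep _) ?_⟩
  have hlast : i + 1 + d + (r - d - 1) = i + r := by omega
  simpa only [hlast, hper i, add_zero, ← hj] using hchord

theorem IsCycle.exists_isChordless {r : ℕ} {β : ℕ → X} (hc : IsCycle R r β) :
    ∃ r' β', IsCycle R r' β' ∧ IsChordless R β' := by
  induction r using Nat.strong_induction_on generalizing β with
  | _ r ih =>
    by_cases hβ : IsChordless R β
    · exact ⟨r, β, hc, hβ⟩
    · simp only [IsChordless, not_forall] at hβ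
      obtain ⟨i, j, hchord, hne⟩ := hβ
      obtain ⟨r', hr', β', hc'⟩ := hc.exists_shorter hchord hne
      exact ih r' hr' hc'

/-- On the orbit of `b`, `f^[p - 1]` inverts `f`, so the cycle walks the orbit backwards. -/
theorem isCycle_of_isPeriodicPt {Y : Type*} {f : Y → Y} {g : Y → X}
    (hf : ∀ y, R (g (f y)) (g y)) {p : ℕ} {b : Y} (hp : 0 < p) (hb : Function.IsPeriodicPt f p b) :
    IsCycle R p (fun k => g (f^[(p - 1) * k] b)) := by
  refine ⟨hp, fun k => ?_, fun k => ?_⟩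
  · have hk : (p - 1) * (k + p) = (p - 1) * k + p * (p - 1) := by ring
    simp only [hk, Function.iterate_add_apply, (hb.mul_const (p - 1)).eq]
  · have hk : (p - 1) * (k + 1) + 1 = (p - 1) * k + p := by rw [mul_add]; omega
    have := hf (f^[(p - 1) * (k + 1)] b)
    rwa [← Function.iterate_succ_apply' f, Nat.succ_eq_add_one, hk, Function.iterate_add_apply,
      hb.eq] at this

theorem exists_isCycle_of_forall_exists_rel (s : Finset X) (hs : s.Nonempty)
    (h : ∀ a ∈ s, ∃ b ∈ s, R b a) : ∃ r β, IsCycle R r β := by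
  choose σ hσs hσ using fun a : s => h a a.2
  let f : s → s := fun a => ⟨σ a, hσs a⟩
  obtain ⟨a, ha⟩ := hs
  have hperiodic : ∀ i j, i < j → f^[i] ⟨a, ha⟩ = f^[j] ⟨a, ha⟩ → ∃ r β, IsCycle R r β := by
    intro i j hij heq
    refine ⟨_, _, isCycle_of_isPeriodicPt (f := f) (g := Subtype.val) (fun y => hσ y)
      (Nat.sub_pos_of_lt hij) (b := f^[i] ⟨a, ha⟩) ?_⟩
    rw [Function.IsPeriodicPt, Function.IsFixedPt, ← Function.iterate_add_apply,
      Nat.sub_add_cancel hij.le, heq]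
  obtain ⟨i, j, hij, heq⟩ := Finite.exists_ne_map_eq_of_infinite (f^[·] ⟨a, ha⟩)
  rcases hij.lt_or_gt with hlt | hgt
  · exact hperiodic i j hlt heq
  · exact hperiodic j i hgt heq.symm

end Relation

namespace RedStruct

theorem zero_mem_tau (𝒥 : RedStruct n) {α η : Term n} (hα : α ∈ 𝒥.M) (hη : η ∈ 𝒥.tau α) :
    0 ∈ 𝒥.tau α :=
  𝒥.tau_orderIdeal α hα η hη 0 zero_le

theorem ne_of_mem_lam (𝒥 : RedStruct n) {α η γ : Term n} (hα : α ∈ 𝒥.M) (hη : η ∈ 𝒥.tau α)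
    (hγ : γ ∈ 𝒥.lam α) : γ ≠ α := by
  rintro rfl
  exact 𝒥.lam_tail γ hα γ hγ ⟨0, 𝒥.zero_mem_tau hα hη, (add_zero γ).symm⟩

theorem hasDisjointCones.eq_of_add_eq {𝒥 : RedStruct n} (hd : 𝒥.hasDisjointCones)
    {α α' η η' : Term n} (hα : α ∈ 𝒥.M) (hη : η ∈ 𝒥.tau α) (hα' : α' ∈ 𝒥.M)
    (hη' : η' ∈ 𝒥.tau α') (heq : α + η = α' + η') : α = α' ∧ η = η' := by
  have hαα' : α = α' := by
    by_contra hne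
    have hmem : α + η ∈ 𝒥.cone α ∩ 𝒥.cone α' := ⟨⟨η, hη, rfl⟩, ⟨η', hη', heq⟩⟩
    rw [hd α hα α' hα' hne] at hmem
    exact hmem
  subst hαα'
  exact ⟨rfl, add_left_cancel heq⟩

theorem tau_eq_of_isSubstructure {𝒥 𝒥' : RedStruct n} (hsub : 𝒥'.IsSubstructure 𝒥)
    (hd : 𝒥.hasDisjointCones) {α : Term n} (hα : α ∈ 𝒥.M) : 𝒥'.tau α = 𝒥.tau α := by
  obtain ⟨hM, -, htau⟩ := hsub
  refine (htau α hα).antisymm fun η hη => ?_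
  obtain ⟨α', hα', η', hη', heq⟩ := (𝒥'.cover (α + η)).mp ⟨α, hM ▸ hα, η, rfl⟩
  rw [hM] at hα'
  obtain ⟨rfl, rfl⟩ := hd.eq_of_add_eq hα hη hα' (htau α' hα' hη') heq
  exact hη'

theorem IsNoetherianOver.of_isSubstructure {A : Type*} [CommRing A] {𝒥 𝒥' : RedStruct n}
    (hN : 𝒥'.IsNoetherianOver A) (hsub : 𝒥'.IsSubstructure 𝒥) (hd : 𝒥.hasDisjointCones) :
    𝒥.IsNoetherianOver A := by
  have ⟨hM, hlam, _⟩ := hsub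
  intro F hF ⟨g, hg⟩
  refine hN F (fun α hα => hlam ▸ hF α (hM ▸ hα)) ⟨g, fun i => ?_⟩
  obtain ⟨α, hα, η, hη, hc, heq⟩ := hg i
  exact ⟨α, hM ▸ hα, η, tau_eq_of_isSubstructure hsub hd hα ▸ hη, hc, heq⟩

end RedStruct

theorem RelNoetherian.wellFounded {X : Type*} {r : X → X → Prop} (h : RelNoetherian r) :
    WellFounded (flip r) :=
  wellFounded_iff_isEmpty_descending_chain.mpr ⟨fun ⟨f, hf⟩ => h ⟨f, hf⟩⟩

section Reduction

open MvPolynomial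

variable {A : Type*} [CommRing A] {𝒥 : RedStruct n} {F : Term n → MvPolynomial (Fin n) A}

theorem exists_isReducedPoly_redStar (hN : RelNoetherian (Red 𝒥 F)) (g : MvPolynomial (Fin n) A) :
    ∃ l, IsReducedPoly 𝒥 l ∧ RedStar 𝒥 F g l := by
  induction g using hN.wellFounded.induction with
  | _ g ih =>
    by_cases hg : IsReducedPoly 𝒥 g
    · exact ⟨g, hg, .refl⟩
    · simp only [IsReducedPoly, not_forall, not_not] at hg
      obtain ⟨β, hβ, hβJ⟩ := hg
      obtain ⟨α, hα, η, hη, rfl⟩ := (𝒥.cover β).mp hβJ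
      have hstep : Red 𝒥 F g (g - monomial η (coeff (α + η) g) * F α) :=
        ⟨α, hα, η, hη, mem_support_iff.mp hβ, rfl⟩
      obtain ⟨l, hl, hstar⟩ := ih _ hstep
      exact ⟨l, hl, .head hstep hstar⟩

theorem sub_mem_tauSpan_of_reflTransGen {σ : Term n → Set (Term n)} {g h : MvPolynomial (Fin n) A}
    (hgh : Relation.ReflTransGen (RedStep 𝒥 σ F) g h) : g - h ∈ tauSpan 𝒥 σ F := by
  induction hgh with
  | refl => simp
  | @tail b _ _ hstep ih =>
    obtain ⟨α, hα, η, hη, -, rfl⟩ := hstep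
    have hsplit : g - (b - monomial η (coeff (α + η) b) * F α) =
        (g - b) + coeff (α + η) b • (monomial η 1 * F α) := by
      rw [← smul_mul_assoc, smul_monomial, smul_eq_mul, mul_one]
      ring
    rw [hsplit]
    exact add_mem ih (Submodule.smul_mem _ _ (Submodule.subset_span ⟨α, hα, η, hη, rfl⟩))

theorem IsReducedPoly.sub {p q : MvPolynomial (Fin n) A} (hp : IsReducedPoly 𝒥 p)
    (hq : IsReducedPoly 𝒥 q) : IsReducedPoly 𝒥 (p - q) := by
  intro β hβ
  rcases Finset.mem_union.mp (support_sub (Fin n) p q hβ) with h | h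
  exacts [hp β h, hq β h]

theorem exists_isRepr_of_mem_tauSpan {σ : Term n → Set (Term n)} {p : MvPolynomial (Fin n) A}
    (hp : p ∈ tauSpan 𝒥 σ F) : ∃ c, IsRepr 𝒥 σ F c p := by
  have himage : tauF 𝒥 σ F = (fun q : Term n × Term n => monomial q.2 (1 : A) * F q.1) ''
      {q | q.1 ∈ 𝒥.M ∧ q.2 ∈ σ q.1} := by
    ext p
    simp [tauF, eq_comm, and_assoc]
  rw [tauSpan, himage, Finsupp.mem_span_image_iff_linearCombination] at hp
  obtain ⟨c, hc, rfl⟩ := hp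
  refine ⟨c, fun q hq => hc hq, ?_⟩
  rw [Finsupp.linearCombination_apply]
  refine Finset.sum_congr rfl fun q _ => ?_
  dsimp only
  rw [← smul_mul_assoc, smul_monomial, smul_eq_mul, mul_one]

theorem IsMarkedSet.coeff_add_monomial_mul (hF : IsMarkedSet 𝒥 F) {α : Term n} (hα : α ∈ 𝒥.M)
    (η : Term n) (a : A) : coeff (α + η) (monomial η a * F α) = a := by
  rw [coeff_monomial_mul', if_pos le_add_self, add_tsub_cancel_right, (hF α hα).1, mul_one]

theorem IsMarkedSet.eq_or_exists_of_coeff_monomial_mul_ne_zero (hF : IsMarkedSet 𝒥 F)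
    {α η b : Term n} (hα : α ∈ 𝒥.M) {a : A} (h : coeff b (monomial η a * F α) ≠ 0) :
    b = α + η ∨ ∃ γ ∈ 𝒥.lam α, b = γ + η := by
  rw [coeff_monomial_mul'] at h
  split_ifs at h with hle
  · have hb : b = b - η + η := (tsub_add_cancel_of_le hle).symm
    rcases (hF α hα).2 _ (right_ne_zero_of_mul h) with heq | hγ
    · exact .inl (heq ▸ hb)
    · exact .inr ⟨_, hγ, hb⟩
  · exact absurd rfl h

end Reduction

/-- Reducing `x^β = x^{α+η}` by `x^η f_α` may create the term `x^β' = x^{γ+η}`. -/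
def RedStruct.TermStep (𝒥 : RedStruct n) (β β' : Term n) : Prop :=
  ∃ α ∈ 𝒥.M, ∃ η ∈ 𝒥.tau α, ∃ γ ∈ 𝒥.lam α, β = α + η ∧ β' = γ + η

section OnesMarkedSet

open MvPolynomial

variable {A : Type*} [CommRing A] (𝒥 : RedStruct n)

/-- `α` is erased because it may lie in `λ_α` when `τ_α = ∅`. -/
noncomputable def onesMarkedSet (α : Term n) : MvPolynomial (Fin n) A :=
  monomial α 1 + ∑ γ ∈ (𝒥.lam α).erase α, monomial γ 1

theorem isMarkedSet_onesMarkedSet : IsMarkedSet 𝒥 (onesMarkedSet (A := A) 𝒥) := by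
  intro α _
  refine ⟨by simp [onesMarkedSet, coeff_sum, coeff_monomial], fun β hβ => ?_⟩
  by_contra! h
  exact hβ (by simp [onesMarkedSet, coeff_sum, coeff_monomial, h.1.symm, h.2])

variable {𝒥}

theorem coeff_monomial_mul_onesMarkedSet {α η γ : Term n} (hα : α ∈ 𝒥.M) (hη : η ∈ 𝒥.tau α)
    (hγ : γ ∈ 𝒥.lam α) {b : Term n} (hb : ∀ γ' ∈ 𝒥.lam α, b = γ' + η → γ' = γ) :
    coeff b (monomial η (1 : A) * onesMarkedSet 𝒥 α) =
      (if b = α + η then 1 else 0) + (if b = γ + η then 1 else 0) := by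
  simp only [onesMarkedSet, mul_add, Finset.mul_sum, monomial_mul, mul_one, coeff_add, coeff_sum,
    coeff_monomial]
  rw [Finset.sum_eq_single_of_mem γ (Finset.mem_erase.mpr ⟨𝒥.ne_of_mem_lam hα hη hγ, hγ⟩)]
  · simp only [add_comm, eq_comm]
  · intro γ' hγ' hne
    rw [if_neg]
    rintro h
    exact hne (hb γ' (Finset.mem_of_mem_erase hγ') (h ▸ add_comm _ _))

theorem not_isNoetherianOver_of_isChordless [Nontrivial A] {β : ℕ → Term n}
    (hpath : ∀ k, 𝒥.TermStep (β k) (β (k + 1))) (hβ : Relation.IsChordless 𝒥.TermStep β) :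
    ¬ 𝒥.IsNoetherianOver A := by
  intro hN
  choose α hα η hη γ hγ hβα hβγ using hpath
  set F : Term n → MvPolynomial (Fin n) A := onesMarkedSet 𝒥
  have hF : ∀ s k, coeff (β k) (monomial (η s) (1 : A) * F (α s)) =
      (if β k = β s then 1 else 0) + (if β k = β (s + 1) then 1 else 0) := by
    intro s k
    rw [hβα s, hβγ s]
    refine coeff_monomial_mul_onesMarkedSet (hα s) (hη s) (hγ s) fun γ' hγ' hk => ?_
    have := hβ s k ⟨α s, hα s, η s, hη s, γ', hγ', hβα s, hk⟩
    rw [hβγ s, hk] at this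
    exact add_right_cancel this
  let g : ℕ → MvPolynomial (Fin n) A := fun s =>
    monomial (β 0) 1 - ∑ t ∈ Finset.range s, monomial (η t) ((-1) ^ t) * F (α t)
  have hg_succ : ∀ s, g (s + 1) = g s - monomial (η s) ((-1) ^ s) * F (α s) := fun s => by
    simp only [g, Finset.sum_range_succ, sub_add_eq_sub_sub]
  have hg : ∀ s k, coeff (β k) (g s) = if β k = β s then (-1) ^ s else 0 := by
    intro s
    induction s with
    | zero => intro k; simp [g, coeff_monomial, eq_comm]
    | succ s ih =>
      intro k
      rw [hg_succ, coeff_sub, ih, ← mul_one ((-1 : A) ^ s), ← C_mul_monomial, mul_assoc,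
        coeff_C_mul, hF]
      split_ifs <;> ring
  refine hN F (isMarkedSet_onesMarkedSet 𝒥) ⟨g, fun s => ⟨α s, hα s, η s, hη s, ?_, ?_⟩⟩
  · rw [← hβα, hg, if_pos rfl]
    exact (isUnit_neg_one.pow s).ne_zero
  · rw [← hβα, hg, if_pos rfl, hg_succ]

end OnesMarkedSet

section Confluence

open MvPolynomial

variable {A : Type*} [CommRing A] {𝒥 : RedStruct n} {F : Term n → MvPolynomial (Fin n) A}

theorem IsRepr.exists_termStep_to_head (hd : 𝒥.hasDisjointCones) (hF : IsMarkedSet 𝒥 F)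
    {c : (Term n × Term n) →₀ A} {p : MvPolynomial (Fin n) A} (hc : IsRepr 𝒥 𝒥.tau F c p)
    (hp : IsReducedPoly 𝒥 p) {q : Term n × Term n} (hq : q ∈ c.support) :
    ∃ q' ∈ c.support, 𝒥.TermStep (q'.1 + q'.2) (q.1 + q.2) := by
  obtain ⟨hsupp, rfl⟩ := hc
  obtain ⟨hα, hη⟩ := hsupp q hq
  have hzero : coeff (q.1 + q.2) (c.sum fun q a => monomial q.2 a * F q.1) = 0 :=
    notMem_support_iff.mp fun h => hp _ h ⟨q.1, hα, q.2, rfl⟩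
  by_contra! hnone
  rw [Finsupp.sum, coeff_sum, Finset.sum_eq_single_of_mem q hq,
    hF.coeff_add_monomial_mul hα] at hzero
  · exact Finsupp.mem_support_iff.mp hq hzero
  · intro q' hq' hne
    by_contra h
    obtain ⟨hα', hη'⟩ := hsupp q' hq'
    rcases hF.eq_or_exists_of_coeff_monomial_mul_ne_zero hα' h with heq | ⟨γ, hγ, heq⟩
    · obtain ⟨h1, h2⟩ := hd.eq_of_add_eq hα hη hα' hη' heq
      exact hne (Prod.ext h1 h2).symm
    · exact hnone q' hq' ⟨q'.1, hα', q'.2, hη', γ, hγ, rfl, heq⟩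

theorem eq_zero_of_mem_tauSpan_of_isReducedPoly (hd : 𝒥.hasDisjointCones)
    (hN : 𝒥.IsNoetherianOver A) (hF : IsMarkedSet 𝒥 F) {p : MvPolynomial (Fin n) A}
    (hp : p ∈ tauSpan 𝒥 𝒥.tau F) (hred : IsReducedPoly 𝒥 p) : p = 0 := by
  by_contra hp0
  obtain ⟨c, hc⟩ := exists_isRepr_of_mem_tauSpan hp
  obtain ⟨q, hq⟩ : c.support.Nonempty := by
    rw [Finset.nonempty_iff_ne_empty, Ne, Finsupp.support_eq_empty]
    rintro rfl
    exact hp0 (by simp [hc.2])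
  have : Nontrivial A := nontrivial_of_ne _ _ (Finsupp.mem_support_iff.mp hq)
  obtain ⟨r, β, hcycle⟩ := Relation.exists_isCycle_of_forall_exists_rel (R := 𝒥.TermStep)
    (c.support.image fun q => q.1 + q.2) ⟨_, Finset.mem_image_of_mem _ hq⟩ (by
      simp only [Finset.forall_mem_image, Finset.exists_mem_image]
      exact fun q hq => hc.exists_termStep_to_head hd hF hred hq)
  obtain ⟨r', β', hcycle', hchordless⟩ := hcycle.exists_isChordless
  exact not_isNoetherianOver_of_isChordless hcycle'.2.2 hchordless hN

end Confluence

/-- a weakly noetherian RS with disjoint cones is noetherian and confluent: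
for every marked set `F`, every polynomial has exactly one reduced form. -/
theorem stmt7 {n : ℕ} {A : Type} [CommRing A] (𝒥 : RedStruct n)
    (hwn : 𝒥.IsWeaklyNoetherianOver A) (hd : 𝒥.hasDisjointCones) :
    𝒥.IsNoetherianOver A ∧
      ∀ F : Term n → MvPolynomial (Fin n) A, IsMarkedSet 𝒥 F →
        ∀ g : MvPolynomial (Fin n) A,
          ∃! l : MvPolynomial (Fin n) A, IsReducedPoly 𝒥 l ∧ RedStar 𝒥 F g l := by
  obtain ⟨𝒥', hsub, hN'⟩ := hwn
  have hN : 𝒥.IsNoetherianOver A := hN'.of_isSubstructure hsub hd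
  refine ⟨hN, fun F hF g => ?_⟩
  obtain ⟨l, hl, hgl⟩ := exists_isReducedPoly_redStar (hN F hF) g
  refine ⟨l, ⟨hl, hgl⟩, fun l' ⟨hl', hgl'⟩ => ?_⟩
  have hmem : l' - l ∈ tauSpan 𝒥 𝒥.tau F := by
    rw [← sub_sub_sub_cancel_left l l' g]
    exact sub_mem (sub_mem_tauSpan_of_reflTransGen hgl) (sub_mem_tauSpan_of_reflTransGen hgl')
  exact sub_eq_zero.mp (eq_zero_of_mem_tauSpan_of_isReducedPoly hd hN hF hmem (hl'.sub hl))
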